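/- arXiv:1803.09778 — 2 statements merged into one kernel-verified Lean document; each statement's English description precedes it below -/
import Mathlib

section
/- For each fixed b, f, and l, the function g(b) = max(b − f + l − N_b, 0) has increasing differences in b: g(b+1) − g(b) ≤ g(b+2) − g(b+1); consequently the buffer cost c(b) = b + η·E[max(b − f + l − N_b, 0)] is integer convex in b. -/
/-- For fixed `f, l`, the overflow `g(b) = max(b − f + l − N_b, 0)`
has increasing differences in `b`, and consequently the buffer cost
`c(b) = b + η·E_{f,l}[max(b − f + l − N_b, 0)]` is integer convex in `b`
(i.e., `c(n+1) − c(n)` is non-decreasing in `n`). -/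
theorem overflow_increasing_differences_and_cost_convex
    (Nb : ℕ) (η : ℝ) (hη : 0 ≤ η)
    (sf sl : Finset ℤ) (pf pl : ℤ → ℝ)
    (hpf : ∀ f, 0 ≤ pf f) (hpl : ∀ l, 0 ≤ pl l)
    (hsf : ∀ f ∈ sf, f = 0 ∨ f = 1) (hsl : ∀ l ∈ sl, 0 ≤ l)
    (hpfsum : ∑ f ∈ sf, pf f = 1) (hplsum : ∑ l ∈ sl, pl l = 1)
    (c : ℤ → ℝ)
    (hc : ∀ b : ℤ, c b = b + η *
      ∑ f ∈ sf, ∑ l ∈ sl, pf f * pl l * ((max (b - f + l - Nb) 0 : ℤ) : ℝ)) :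
    (∀ f l b : ℤ,
      (max (b + 1 - f + l - Nb) 0 : ℤ) - max (b - f + l - Nb) 0 ≤
      (max (b + 2 - f + l - Nb) 0 : ℤ) - max (b + 1 - f + l - Nb) 0) ∧
    (∀ n₁ n₂ : ℤ, n₁ ≤ n₂ → c (n₁ + 1) - c n₁ ≤ c (n₂ + 1) - c n₂) := by
  have key : ∀ n₁ n₂ f l : ℤ, n₁ ≤ n₂ →
      (max (n₁ + 1 - f + l - Nb) 0 : ℤ) - max (n₁ - f + l - Nb) 0 ≤
      (max (n₂ + 1 - f + l - Nb) 0 : ℤ) - max (n₂ - f + l - Nb) 0 := by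
    intro n₁ n₂ f l h
    rcases le_or_gt (n₁ + 1 - f + l - Nb) 0 with h1 | h1 <;>
    rcases le_or_gt (n₂ - f + l - Nb) 0 with h2 | h2 <;> omega
  constructor
  · intro f l b
    have := key b (b + 1) f l (by omega)
    omega
  · intro n₁ n₂ h
    rw [hc, hc, hc, hc]
    have e1 : ((n₁+1:ℤ):ℝ) = (n₁:ℝ)+1 := by push_cast; ring
    have e2 : ((n₂+1:ℤ):ℝ) = (n₂:ℝ)+1 := by push_cast; ring
    have hsum : ∀ m : ℤ,
        (∑ f ∈ sf, ∑ l ∈ sl, pf f * pl l * ((max (m + 1 - f + l - Nb) 0 : ℤ) : ℝ))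
        - ∑ f ∈ sf, ∑ l ∈ sl, pf f * pl l * ((max (m - f + l - Nb) 0 : ℤ) : ℝ)
        = ∑ f ∈ sf, ∑ l ∈ sl, pf f * pl l *
            (((max (m + 1 - f + l - Nb) 0 : ℤ) : ℝ) - ((max (m - f + l - Nb) 0 : ℤ) : ℝ)) := by
      intro m
      rw [← Finset.sum_sub_distrib]
      refine Finset.sum_congr rfl fun f _ => ?_
      rw [← Finset.sum_sub_distrib]
      refine Finset.sum_congr rfl fun l _ => ?_
      ring
    have hineq : (∑ f ∈ sf, ∑ l ∈ sl, pf f * pl l * ((max (n₁ + 1 - f + l - Nb) 0 : ℤ) : ℝ))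
        - ∑ f ∈ sf, ∑ l ∈ sl, pf f * pl l * ((max (n₁ - f + l - Nb) 0 : ℤ) : ℝ)
        ≤ (∑ f ∈ sf, ∑ l ∈ sl, pf f * pl l * ((max (n₂ + 1 - f + l - Nb) 0 : ℤ) : ℝ))
        - ∑ f ∈ sf, ∑ l ∈ sl, pf f * pl l * ((max (n₂ - f + l - Nb) 0 : ℤ) : ℝ) := by
      rw [hsum, hsum]
      refine Finset.sum_le_sum fun f _ => Finset.sum_le_sum fun l _ => ?_
      refine mul_le_mul_of_nonneg_left ?_ (mul_nonneg (hpf f) (hpl l))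
      have := key n₁ n₂ f l h
      rw [← Int.cast_sub, ← Int.cast_sub]
      exact_mod_cast this
    nlinarith [mul_le_mul_of_nonneg_left hineq hη, e1, e2]
end

section
/- If V : {0,...,N_b} × {0,...,N_e} → ℝ is submodular in (b,e), then for any independent non-negative integer-valued random variables l and e_H, the function (b̃,ẽ) ↦ E_{l,e_H}[V(min(b̃+l, N_b), min(ẽ+e_H, N_e))] is submodular in (b̃,ẽ). -/
/-! Decreasing differences survive reparametrizing each coordinate by a monotone map, and
survive non-negative linear combinations. For fixed shifts `l, x ≥ 0` the truncations
`b ↦ min (b + l) N_b` and `e ↦ min (e + x) N_e` are monotone and map `b, e ≥ 0` into the box,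
and the expectation over independent shifts is a non-negative combination of such terms. -/

open Set

variable {α β γ δ R ι : Type*} [Preorder α] [Preorder β] [Preorder γ] [Preorder δ]
  [Ring R] [PartialOrder R]

def HasDecreasingDifferencesOn (V : α → β → R) (s : Set α) (t : Set β) : Prop :=
  ∀ ⦃bm bp em ep⦄, bm ∈ s → bp ∈ s → em ∈ t → ep ∈ t → bm ≤ bp → em ≤ ep →
    V bp ep - V bp em ≤ V bm ep - V bm em

namespace HasDecreasingDifferencesOn

variable {V : α → β → R} {s : Set α} {t : Set β}

theorem comp_monotoneOn {f : γ → α} {g : δ → β} {s' : Set γ} {t' : Set δ}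
    (hV : HasDecreasingDifferencesOn V s t) (hf : MonotoneOn f s') (hg : MonotoneOn g t')
    (hfs : MapsTo f s' s) (hgt : MapsTo g t' t) :
    HasDecreasingDifferencesOn (fun b e => V (f b) (g e)) s' t' :=
  fun _ _ _ _ hbm hbp hem hep hb he =>
    hV (hfs hbm) (hfs hbp) (hgt hem) (hgt hep) (hf hbm hbp hb) (hg hem hep he)

theorem const_mul [IsOrderedRing R] (hV : HasDecreasingDifferencesOn V s t) {c : R}
    (hc : 0 ≤ c) :
    HasDecreasingDifferencesOn (fun b e => c * V b e) s t := by
  intro bm bp em ep hbm hbp hem hep hb he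
  simp only [← mul_sub]
  exact mul_le_mul_of_nonneg_left (hV hbm hbp hem hep hb he) hc

theorem sum [IsOrderedRing R] {u : Finset ι} {V : ι → α → β → R}
    (hV : ∀ i ∈ u, HasDecreasingDifferencesOn (V i) s t) :
    HasDecreasingDifferencesOn (fun b e => ∑ i ∈ u, V i b e) s t := by
  intro bm bp em ep hbm hbp hem hep hb he
  simp only [← Finset.sum_sub_distrib]
  exact Finset.sum_le_sum fun i hi => hV i hi hbm hbp hem hep hb he

end HasDecreasingDifferencesOn

theorem monotone_min_add {M : Type*} [AddCommMonoid M] [LinearOrder M] [IsOrderedAddMonoid M]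
    (l N : M) : Monotone fun b => min (b + l) N :=
  fun _ _ h => min_le_min_right N (add_le_add_left h l)

theorem mapsTo_min_add_Ici_Icc {M : Type*} [AddCommMonoid M] [LinearOrder M]
    [IsOrderedAddMonoid M] {l N : M} (hl : 0 ≤ l) (hN : 0 ≤ N) :
    MapsTo (fun b => min (b + l) N) (Ici 0) (Icc 0 N) :=
  fun _ hb => ⟨le_min (add_nonneg hb hl) hN, min_le_right _ _⟩

theorem truncated_shifts_preserve_submodularity_general
    (Nb Ne : ℕ) (V : ℤ → ℤ → ℝ)
    (hV : ∀ bm bp em ep : ℤ, 0 ≤ bm → bm ≤ bp → bp ≤ Nb →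
      0 ≤ em → em ≤ ep → ep ≤ Ne →
      V bp ep - V bp em ≤ V bm ep - V bm em)
    (sl seH : Finset ℤ) (pl peH : ℤ → ℝ)
    (hpl : ∀ l, 0 ≤ pl l) (hpeH : ∀ x, 0 ≤ peH x)
    (hsl : ∀ l ∈ sl, 0 ≤ l) (hseH : ∀ x ∈ seH, 0 ≤ x)
    (W : ℤ → ℤ → ℝ)
    (hW : ∀ b e : ℤ, W b e = ∑ l ∈ sl, ∑ x ∈ seH,
      pl l * peH x * V (min (b + l) (Nb : ℤ)) (min (e + x) (Ne : ℤ))) :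
    ∀ bm bp em ep : ℤ, 0 ≤ bm → bm ≤ bp → 0 ≤ em → em ≤ ep →
      W bp ep - W bp em ≤ W bm ep - W bm em := by
  have hVbox : HasDecreasingDifferencesOn V (Icc 0 (Nb : ℤ)) (Icc 0 (Ne : ℤ)) :=
    fun bm bp em ep hbm hbp hem hep hb he => hV bm bp em ep hbm.1 hb hbp.2 hem.1 he hep.2
  have hWdd : HasDecreasingDifferencesOn W (Ici 0) (Ici 0) := by
    rw [show W = _ from funext₂ hW]
    refine HasDecreasingDifferencesOn.sum fun l hl => HasDecreasingDifferencesOn.sum fun x hx => ?_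
    have hshift : HasDecreasingDifferencesOn
        (fun b e => V (min (b + l) (Nb : ℤ)) (min (e + x) (Ne : ℤ))) (Ici 0) (Ici 0) :=
      hVbox.comp_monotoneOn ((monotone_min_add l _).monotoneOn _)
        ((monotone_min_add x _).monotoneOn _)
        (mapsTo_min_add_Ici_Icc (hsl l hl) (Nat.cast_nonneg _))
        (mapsTo_min_add_Ici_Icc (hseH x hx) (Nat.cast_nonneg _))
    exact hshift.const_mul (mul_nonneg (hpl l) (hpeH x))
  intro bm bp em ep hbm hb hem he
  exact hWdd hbm (hbm.trans hb) hem (hem.trans he) hb he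

/-- Independent truncated random shifts in each coordinate
preserve submodularity: if `V` is submodular on `{0,...,N_b} × {0,...,N_e}`,
then `(b̃,ẽ) ↦ E_{l,e_H}[V(min(b̃+l,N_b), min(ẽ+e_H,N_e))]` is submodular. -/
theorem truncated_shifts_preserve_submodularity
    (Nb Ne : ℕ) (V : ℤ → ℤ → ℝ)
    (hV : ∀ bm bp em ep : ℤ, 0 ≤ bm → bm ≤ bp → bp ≤ Nb →
      0 ≤ em → em ≤ ep → ep ≤ Ne →
      V bp ep - V bp em ≤ V bm ep - V bm em)
    (sl seH : Finset ℤ) (pl peH : ℤ → ℝ)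
    (hpl : ∀ l, 0 ≤ pl l) (hpeH : ∀ x, 0 ≤ peH x)
    (hsl : ∀ l ∈ sl, 0 ≤ l) (hseH : ∀ x ∈ seH, 0 ≤ x)
    (hplsum : ∑ l ∈ sl, pl l = 1) (hpeHsum : ∑ x ∈ seH, peH x = 1)
    (W : ℤ → ℤ → ℝ)
    (hW : ∀ b e : ℤ, W b e = ∑ l ∈ sl, ∑ x ∈ seH,
      pl l * peH x * V (min (b + l) (Nb : ℤ)) (min (e + x) (Ne : ℤ))) :
    ∀ bm bp em ep : ℤ, 0 ≤ bm → bm ≤ bp → 0 ≤ em → em ≤ ep →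
      W bp ep - W bp em ≤ W bm ep - W bm em :=
  truncated_shifts_preserve_submodularity_general Nb Ne V hV sl seH pl peH hpl hpeH hsl hseH W hW
end
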